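/- arXiv:1302.2829 — 2 statements merged into one kernel-verified Lean document; each statement's English description precedes it below -/
import Mathlib

section
/- (Lemma A.1, third inequality) Let s > 0 be real, let θ ∈ ℂ with |θ| ≤ 1/30, let x ∈ ℝ³ and j ∈ {1,2,3}. Then ∑_{λ∈{0,1}} ∫_{{k∈ℝ³ : |k| ≥ s}} |G(θ)_j(x,(k,λ))|² / |k|² d³k ≤ α³ · C₂² · ( |log s| + 1 ), where log is the natural logarithm. -/
open MeasureTheory

noncomputable section

/-- `ℝ³` as a Euclidean space. -/
abbrev R3 : Type := EuclideanSpace ℝ (Fin 3)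

/-- The coupling function `G(θ)(x,(k,λ))`, `j`-th component. -/
def Gfun (α : ℝ) (ε : R3 → Fin 2 → Fin 3 → ℂ) (θ : ℂ)
    (x k : R3) (lam : Fin 2) (j : Fin 3) : ℂ :=
  ((α ^ ((3:ℝ)/2) / (2 * Real.pi) ^ ((3:ℝ)/2) : ℝ) : ℂ) * Complex.exp (-θ) *
    Complex.exp (-(Complex.exp (-(2*θ))) * ((‖k‖ ^ 2 : ℝ) : ℂ)) *
    (((2 * ‖k‖) ^ (-(1:ℝ)/2) : ℝ) : ℂ) *
    Complex.exp (-Complex.I * (α : ℂ) * ((inner ℝ k x : ℝ) : ℂ)) *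
    ε k lam j

/-- The polarization vectors form an a.e. orthonormal transversal family. -/
def Polarization (ε : R3 → Fin 2 → Fin 3 → ℂ) : Prop :=
  Measurable ε ∧
  ∀ᵐ k ∂(volume : Measure R3), k ≠ 0 →
    ∀ lam mu : Fin 2,
      (∑ j : Fin 3, (starRingEnd ℂ) (ε k lam j) * ε k mu j) = (if lam = mu then 1 else 0) ∧
      (∑ j : Fin 3, ((k j : ℝ) : ℂ) * ε k lam j) = 0

def C1 : ℝ := Real.exp (3/4) / (2 * Real.pi)

def C2 : ℝ := Real.sqrt 2 * Real.exp (1/4) / (2 * Real.pi)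

def C1om : ℝ := Real.exp (1/2) * Real.pi ^ ((1:ℝ)/4) / (2 ^ ((1:ℝ)/4) * (2 * Real.pi))

/-!
Orthonormality of the polarizations gives `‖ε k λ j‖ ≤ 1`, and `‖θ‖ ≤ 1/30` gives
`Re e^{-2θ} ≥ 1/2` and `e^{-2 Re θ} ≤ e^{1/15}`, so that
`‖G(θ)_j‖² / ‖k‖² ≤ α³ e^{1/15} / (2 (2π)³) · e^{-‖k‖²} / ‖k‖³`.
In polar coordinates the integral of `e^{-‖k‖²} / ‖k‖³` over `‖k‖ ≥ s` is `4π ∫_s^∞ e^{-r²} / r dr`;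
with `t = max s 1` this is at most `4π (∫_s^t dr / r + ∫_t^∞ e^{-r} dr) ≤ 4π (|log s| + 1/2)`.
Summing over both polarizations leaves `α³ e^{1/15} / (2π²) · (|log s| + 1/2)`,
and `C₂² = e^{1/2} / (2π²)`.
-/

open Set Real

lemma norm_le_one_of_sum_conj_mul_self_eq_one {ι : Type*} [Fintype ι] {v : ι → ℂ}
    (h : ∑ i, starRingEnd ℂ (v i) * v i = 1) (j : ι) : ‖v j‖ ≤ 1 := by
  have hsum : ∑ i, ‖v i‖ ^ 2 = 1 := by
    simp only [Complex.conj_mul'] at h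
    exact_mod_cast h
  rw [← sq_le_one_iff₀ (norm_nonneg _), ← hsum]
  exact Finset.single_le_sum (fun i _ => sq_nonneg ‖v i‖) (Finset.mem_univ j)

lemma Polarization.ae_norm_le_one {ε : R3 → Fin 2 → Fin 3 → ℂ} (hε : Polarization ε) :
    ∀ᵐ k ∂(volume : Measure R3), ∀ lam j, ‖ε k lam j‖ ≤ 1 := by
  filter_upwards [hε.2, Measure.ae_ne volume 0] with k hk hk0 lam j
  exact norm_le_one_of_sum_conj_mul_self_eq_one (by simpa using (hk hk0 lam lam).1) j

lemma half_le_re_exp_neg_two_mul {θ : ℂ} (hθ : ‖θ‖ ≤ 1 / 30) :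
    1 / 2 ≤ (Complex.exp (-(2 * θ))).re := by
  have hnorm : ‖-(2 * θ)‖ ≤ 1 / 15 := by
    rw [norm_neg, norm_mul, Complex.norm_ofNat]
    linarith
  have h := (Complex.abs_re_le_norm _).trans
    (Complex.norm_exp_sub_one_le (hnorm.trans (by norm_num)))
  rw [Complex.sub_re, Complex.one_re] at h
  linarith [(abs_le.1 h).1]

-- No `k ≠ 0` is needed: at `k = 0` both sides vanish, as `0 ^ (-1/2 : ℝ) = 0` and `x / 0 = 0`.
lemma norm_Gfun_sq {α : ℝ} (hα : 0 ≤ α) (ε : R3 → Fin 2 → Fin 3 → ℂ) (θ : ℂ) (x k : R3)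
    (lam : Fin 2) (j : Fin 3) :
    ‖Gfun α ε θ x k lam j‖ ^ 2 = α ^ 3 / (2 * π) ^ 3 * exp (-(2 * θ.re)) *
      exp (-(2 * (Complex.exp (-(2 * θ))).re * ‖k‖ ^ 2)) / (2 * ‖k‖) * ‖ε k lam j‖ ^ 2 := by
  have hsq : ∀ {a : ℝ}, 0 ≤ a → ∀ p : ℝ, ‖a ^ p‖ ^ 2 = a ^ (p * 2) := fun ha p => by
    rw [norm_of_nonneg (rpow_nonneg ha p)]
    exact_mod_cast (rpow_mul_natCast ha p 2).symm
  have hexp : ∀ a : ℝ, exp a ^ 2 = exp (2 * a) := fun a => by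
    exact_mod_cast (exp_nat_mul a 2).symm
  have hre : (-(Complex.exp (-(2 * θ))) * ((‖k‖ ^ 2 : ℝ) : ℂ)).re =
      -((Complex.exp (-(2 * θ))).re * ‖k‖ ^ 2) := by
    simp only [neg_mul, Complex.neg_re, Complex.re_mul_ofReal]
  have hphase : (-Complex.I * α * (inner ℝ k x : ℂ)).re = 0 := by simp
  simp only [Gfun, norm_mul, Complex.norm_exp, Complex.norm_real, hre, hphase, mul_pow, hexp,
    norm_div, div_pow, hsq hα, hsq (by positivity : (0 : ℝ) ≤ 2 * π),
    hsq (by positivity : (0 : ℝ) ≤ 2 * ‖k‖), Complex.neg_re, exp_zero, mul_one]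
  rw [show (3 / 2 : ℝ) * 2 = (3 : ℕ) by norm_num, show (-1 / 2 : ℝ) * 2 = -1 by norm_num,
    rpow_natCast, rpow_natCast, rpow_neg_one]
  ring_nf

lemma norm_Gfun_sq_div_sq_le {α : ℝ} (hα : 0 ≤ α) {ε : R3 → Fin 2 → Fin 3 → ℂ} {θ : ℂ}
    (hθ : ‖θ‖ ≤ 1 / 30) (x k : R3) (lam : Fin 2) (j : Fin 3) (hε : ‖ε k lam j‖ ≤ 1) :
    ‖Gfun α ε θ x k lam j‖ ^ 2 / ‖k‖ ^ 2 ≤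
      α ^ 3 * exp (1 / 15) / (2 * (2 * π) ^ 3) * (exp (-‖k‖ ^ 2) / ‖k‖ ^ 3) := by
  have hθre : -(2 * θ.re) ≤ 1 / 15 := by
    linarith [neg_abs_le θ.re, Complex.abs_re_le_norm θ]
  have hdecay : -(2 * (Complex.exp (-(2 * θ))).re * ‖k‖ ^ 2) ≤ -‖k‖ ^ 2 := by
    nlinarith [half_le_re_exp_neg_two_mul hθ, sq_nonneg ‖k‖]
  rw [norm_Gfun_sq hα]
  calc _ = α ^ 3 / (2 * π) ^ 3 * exp (-(2 * θ.re)) *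
        exp (-(2 * (Complex.exp (-(2 * θ))).re * ‖k‖ ^ 2)) * ‖ε k lam j‖ ^ 2 / (2 * ‖k‖ ^ 3) := by
        ring
    _ ≤ α ^ 3 / (2 * π) ^ 3 * exp (1 / 15) * exp (-‖k‖ ^ 2) * 1 ^ 2 / (2 * ‖k‖ ^ 3) := by
        gcongr
    _ = _ := by ring

lemma integrableOn_exp_neg_sq_div_Ici {s : ℝ} (hs : 0 < s) :
    IntegrableOn (fun r : ℝ => exp (-r ^ 2) / r) (Ici s) := by
  have hgauss : Integrable fun r : ℝ => s⁻¹ * exp (-1 * r ^ 2) :=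
    (integrable_exp_neg_mul_sq one_pos).const_mul _
  refine hgauss.integrableOn.mono' ?_ ?_
  · refine ContinuousOn.aestronglyMeasurable ?_ measurableSet_Ici
    exact (by fun_prop : Continuous fun r : ℝ => exp (-r ^ 2)).continuousOn.div continuousOn_id
      fun r hr => (hs.trans_le hr).ne'
  · filter_upwards [ae_restrict_mem measurableSet_Ici] with r (hr : s ≤ r)
    rw [norm_of_nonneg (by positivity [hs.trans_le hr]), neg_one_mul, div_eq_inv_mul]
    gcongr

lemma integral_exp_neg_sq_div_Ici_le {s : ℝ} (hs : 0 < s) :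
    ∫ r in Ici s, exp (-r ^ 2) / r ≤ |log s| + 1 / 2 := by
  set t := max s 1
  have hst : s ≤ t := le_max_left s 1
  have ht : 1 ≤ t := le_max_right s 1
  have hint := integrableOn_exp_neg_sq_div_Ici hs
  have hsplit : ∫ r in Ici s, exp (-r ^ 2) / r =
      (∫ r in Ico s t, exp (-r ^ 2) / r) + ∫ r in Ici t, exp (-r ^ 2) / r := by
    rw [← setIntegral_union ((Iio_disjoint_Ici le_rfl).mono_left Ico_subset_Iio_self)
      measurableSet_Ici (hint.mono_set Ico_subset_Ici_self) (hint.mono_set (Ici_subset_Ici.2 hst)),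
      Ico_union_Ici_eq_Ici hst]
  have hnear : ∫ r in Ico s t, exp (-r ^ 2) / r ≤ |log s| := calc
    _ ≤ ∫ r in Ico s t, r⁻¹ := by
      refine setIntegral_mono_on (hint.mono_set Ico_subset_Ici_self) ?_ measurableSet_Ico
        fun r hr => ?_
      · exact (continuousOn_inv₀.mono fun r hr => (hs.trans_le hr.1).ne').integrableOn_compact
          isCompact_Icc |>.mono_set Ico_subset_Icc_self
      · have hr0 : 0 < r := hs.trans_le hr.1
        rw [div_eq_mul_inv]
        exact mul_le_of_le_one_left (inv_nonneg.2 hr0.le) (exp_le_one_iff.2 (by nlinarith))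
    _ = log t - log s := by
      rw [integral_Ico_eq_integral_Ioo, ← integral_Ioc_eq_integral_Ioo,
        ← intervalIntegral.integral_of_le hst, integral_inv_of_pos hs (hs.trans_le hst),
        log_div (hs.trans_le hst).ne' hs.ne']
    _ ≤ |log s| := by
      rcases le_total s 1 with h | h
      · simp [t, max_eq_right h, neg_le_abs]
      · simp [t, max_eq_left h]
  have hfar : ∫ r in Ici t, exp (-r ^ 2) / r ≤ 1 / 2 := calc
    _ ≤ ∫ r in Ioi t, exp (-r) := by
      rw [integral_Ici_eq_integral_Ioi]
      refine setIntegral_mono_on (hint.mono_set (Ioi_subset_Ici hst))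
        (by simpa using exp_neg_integrableOn_Ioi t one_pos) measurableSet_Ioi fun r hr => ?_
      have hr : 1 ≤ r := ht.trans hr.out.le
      calc exp (-r ^ 2) / r ≤ exp (-r ^ 2) := div_le_self (exp_pos _).le hr
        _ ≤ exp (-r) := exp_le_exp.2 (by nlinarith)
    _ = exp (-t) := integral_exp_neg_Ioi t
    _ ≤ exp (-1) := exp_le_exp.2 (neg_le_neg ht)
    _ ≤ 1 / 2 := exp_neg_one_lt_half.le
  linarith

lemma indicator_preimage_norm {E β : Type*} [Norm E] [Zero β] (T : Set ℝ) (f : ℝ → β) :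
    ((‖·‖) ⁻¹' T).indicator (fun k : E => f ‖k‖) = fun k => T.indicator f ‖k‖ :=
  funext fun _ => indicator_comp_right _

lemma setIntegral_fun_norm_preimage (f : ℝ → ℝ) {T : Set ℝ} (hT : MeasurableSet T)
    (hT0 : T ⊆ Ioi 0) :
    ∫ k in (‖·‖) ⁻¹' T, f ‖k‖ ∂(volume : Measure R3) = 4 * π * ∫ r in T, r ^ 2 * f r := by
  have hball : (volume : Measure R3).real (Metric.ball 0 1) = 4 / 3 * π := by
    rw [measureReal_def, EuclideanSpace.volume_ball_fin_three, ENNReal.ofReal_one, one_pow,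
      one_mul, ENNReal.toReal_ofReal (by positivity)]
    ring
  rw [← integral_indicator (measurable_norm hT), indicator_preimage_norm,
    integral_fun_norm_addHaar, finrank_euclideanSpace_fin, hball]
  simp_rw [Nat.add_one_sub_one, smul_eq_mul, ← indicator_mul_right _ fun y : ℝ => y ^ 2]
  rw [setIntegral_indicator hT, inter_eq_right.2 hT0]
  ring

lemma integrableOn_fun_norm_preimage_iff {f : ℝ → ℝ} {T : Set ℝ} (hT : MeasurableSet T)
    (hT0 : T ⊆ Ioi 0) :
    IntegrableOn (fun k : R3 => f ‖k‖) ((‖·‖) ⁻¹' T) ↔ IntegrableOn (fun r => r ^ 2 * f r) T := by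
  rw [← integrable_indicator_iff (measurable_norm hT), indicator_preimage_norm,
    integrable_fun_norm_addHaar, finrank_euclideanSpace_fin]
  simp_rw [Nat.add_one_sub_one, smul_eq_mul, ← indicator_mul_right _ fun y : ℝ => y ^ 2]
  rw [integrableOn_indicator_iff hT, inter_eq_left.2 hT0]

lemma sq_mul_div_pow_three (a r : ℝ) : r ^ 2 * (a / r ^ 3) = a / r := by
  rcases eq_or_ne r 0 with rfl | hr
  · simp
  · field_simp

lemma integrableOn_exp_neg_sq_norm_div_cube {s : ℝ} (hs : 0 < s) :
    IntegrableOn (fun k : R3 => exp (-‖k‖ ^ 2) / ‖k‖ ^ 3) {k | s ≤ ‖k‖} := by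
  rw [show {k : R3 | s ≤ ‖k‖} = (‖·‖) ⁻¹' Ici s from rfl,
    integrableOn_fun_norm_preimage_iff (f := fun r => exp (-r ^ 2) / r ^ 3) measurableSet_Ici
      fun r hr => hs.trans_le hr]
  simpa only [sq_mul_div_pow_three] using integrableOn_exp_neg_sq_div_Ici hs

lemma setIntegral_exp_neg_sq_norm_div_cube_le {s : ℝ} (hs : 0 < s) :
    ∫ k in {k : R3 | s ≤ ‖k‖}, exp (-‖k‖ ^ 2) / ‖k‖ ^ 3 ≤ 4 * π * (|log s| + 1 / 2) := by
  rw [show {k : R3 | s ≤ ‖k‖} = (‖·‖) ⁻¹' Ici s from rfl,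
    setIntegral_fun_norm_preimage (fun r => exp (-r ^ 2) / r ^ 3) measurableSet_Ici
      fun r hr => hs.trans_le hr]
  simp only [sq_mul_div_pow_three]
  gcongr
  exact integral_exp_neg_sq_div_Ici_le hs

lemma C2_sq : C2 ^ 2 = exp (1 / 2) / (2 * π ^ 2) := by
  rw [C2, div_pow, mul_pow, sq_sqrt zero_le_two, ← exp_nat_mul]
  ring_nf

theorem lemmaA1_third_general
    (α : ℝ) (hα0 : 0 < α)
    (ε : R3 → Fin 2 → Fin 3 → ℂ) (hε : Polarization ε)
    (s : ℝ) (hs : 0 < s)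
    (θ : ℂ) (hθ : ‖θ‖ ≤ 1/30)
    (x : R3) (j : Fin 3) :
    (∑ lam : Fin 2, ∫ k in {k : R3 | s ≤ ‖k‖},
        ‖Gfun α ε θ x k lam j‖ ^ 2 / ‖k‖ ^ 2)
      ≤ α ^ 3 * C2 ^ 2 * (|Real.log s| + 1) := by
  set c := α ^ 3 * exp (1 / 15) / (2 * (2 * π) ^ 3)
  have hterm (lam : Fin 2) : ∫ k in {k : R3 | s ≤ ‖k‖}, ‖Gfun α ε θ x k lam j‖ ^ 2 / ‖k‖ ^ 2 ≤
      c * (4 * π * (|log s| + 1 / 2)) := calc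
    _ ≤ ∫ k in {k : R3 | s ≤ ‖k‖}, c * (exp (-‖k‖ ^ 2) / ‖k‖ ^ 3) := by
      refine integral_mono_of_nonneg (.of_forall fun k => by positivity)
        ((integrableOn_exp_neg_sq_norm_div_cube hs).const_mul c) ?_
      exact ae_restrict_of_ae <| hε.ae_norm_le_one.mono fun k hk =>
        norm_Gfun_sq_div_sq_le hα0.le hθ x k lam j (hk lam j)
    _ ≤ c * (4 * π * (|log s| + 1 / 2)) := by
      rw [integral_const_mul]
      gcongr
      exact setIntegral_exp_neg_sq_norm_div_cube_le hs
  calc _ ≤ ∑ _lam : Fin 2, c * (4 * π * (|log s| + 1 / 2)) :=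
        Finset.sum_le_sum fun lam _ => hterm lam
    _ = α ^ 3 / (2 * π ^ 2) * (exp (1 / 15) * (|log s| + 1 / 2)) := by
      simp only [c, Finset.sum_const, Finset.card_univ, Fintype.card_fin, nsmul_eq_mul]
      field_simp
      ring
    _ ≤ α ^ 3 / (2 * π ^ 2) * (exp (1 / 2) * (|log s| + 1)) := by
      gcongr <;> norm_num
    _ = α ^ 3 * C2 ^ 2 * (|log s| + 1) := by
      rw [C2_sq]
      ring

/-- Lemma A.1, third inequality. -/
theorem lemmaA1_third
    (α : ℝ) (hα0 : 0 < α) (hα1 : α ≤ 1)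
    (ε : R3 → Fin 2 → Fin 3 → ℂ) (hε : Polarization ε)
    (s : ℝ) (hs : 0 < s)
    (θ : ℂ) (hθ : ‖θ‖ ≤ 1/30)
    (x : R3) (j : Fin 3) :
    (∑ lam : Fin 2, ∫ k in {k : R3 | s ≤ ‖k‖},
        ‖Gfun α ε θ x k lam j‖ ^ 2 / ‖k‖ ^ 2)
      ≤ α ^ 3 * C2 ^ 2 * (|Real.log s| + 1) :=
  lemmaA1_third_general α hα0 ε hε s hs θ hθ x j
end
end

section
/- (Pointwise bound (a.0.0.1) from the proof of Remark A.3) For every θ ∈ ℂ, every x ∈ ℝ³, every k ∈ ℝ³ ∖ {0}, every λ ∈ {0,1} and j ∈ {1,2,3}: |𝔾(θ)_j(x,(k,λ))| · (1+|x|²)^{−1/2} ≤ |k| · |G(θ)(0,(k,λ))| · (2 + ‖η'‖_∞), where |G(θ)(0,(k,λ))| denotes the Euclidean norm of the vector G(θ)(0,(k,λ)) ∈ ℂ³. -/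
open MeasureTheory

noncomputable section

def CA : ℝ := Real.sqrt (Real.exp 1 / 2) * max (max C1 C1om) C2

/-- The sup norm of the first derivative, `‖η'‖_∞`. -/
def supD (η : ℝ → ℝ) : ℝ := ⨆ r : ℝ, |deriv η r|

/-- The sup norm of the second derivative, `‖η''‖_∞`. -/
def supD2 (η : ℝ → ℝ) : ℝ := ⨆ r : ℝ, |deriv (deriv η) r|

/-- The cutoff function `η`: smooth, nonincreasing on `[0,∞)`, `η = 1` on `(-∞,1]`,
`η = 0` on `[2,∞)`. -/
def Cutoff (η : ℝ → ℝ) : Prop :=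
  ContDiff ℝ (⊤ : ℕ∞) η ∧ AntitoneOn η (Set.Ici 0) ∧ (∀ r : ℝ, r ≤ 1 → η r = 1) ∧
    (∀ r : ℝ, 2 ≤ r → η r = 0)

/-- The function `Q(θ)(x,(k,λ)) = G(θ)(0,(k,λ)) · (η(|x||k|) e^θ x)`. -/
def Qfun (α : ℝ) (ε : R3 → Fin 2 → Fin 3 → ℂ) (η : ℝ → ℝ) (θ : ℂ)
    (x k : R3) (lam : Fin 2) : ℂ :=
  ∑ j : Fin 3, Gfun α ε θ 0 k lam j *
    (((η (‖x‖ * ‖k‖) : ℝ) : ℂ) * Complex.exp θ * ((x j : ℝ) : ℂ))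

/-- The Pauli–Fierz coupling function `𝔾(θ)_j = G(θ)_j − e^{−θ} ∂_{x_j} Q(θ)`. -/
def GPF (α : ℝ) (ε : R3 → Fin 2 → Fin 3 → ℂ) (η : ℝ → ℝ) (θ : ℂ)
    (x k : R3) (lam : Fin 2) (j : Fin 3) : ℂ :=
  Gfun α ε θ x k lam j -
    Complex.exp (-θ) *
      fderiv ℝ (fun y : R3 => Qfun α ε η θ y k lam) x (EuclideanSpace.single j (1:ℝ))


section AuxPB

lemma abs_exp_I_sub_one (t : ℝ) : ‖Complex.exp (t * Complex.I) - 1‖ ≤ |t| := by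
  have h1 : (‖Complex.exp (t * Complex.I) - 1‖)^2 ≤ t^2 := by
    rw [← Complex.normSq_eq_norm_sq, Complex.exp_mul_I]
    have : Complex.normSq (Complex.cos t + Complex.sin t * Complex.I - 1)
        = (Real.cos t - 1)^2 + (Real.sin t)^2 := by
      rw [← Complex.ofReal_cos, ← Complex.ofReal_sin]
      simp [Complex.normSq_apply, Complex.cos_ofReal_re, Complex.sin_ofReal_re,
        Complex.cos_ofReal_im, Complex.sin_ofReal_im]
      ring
    rw [this]
    have h2 := Real.one_sub_sq_div_two_le_cos (x := t)
    have h3 := Real.sin_sq_add_cos_sq t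
    nlinarith
  calc ‖Complex.exp (t * Complex.I) - 1‖
      = Real.sqrt ((‖Complex.exp (t * Complex.I) - 1‖)^2) := by
        rw [Real.sqrt_sq (norm_nonneg _)]
    _ ≤ Real.sqrt (t^2) := Real.sqrt_le_sqrt h1
    _ = |t| := Real.sqrt_sq_eq_abs t

lemma hasFDerivAt_norm' (x : R3) (hx : x ≠ 0) :
    HasFDerivAt (fun y : R3 => ‖y‖) ((‖x‖⁻¹ • innerSL ℝ x : R3 →L[ℝ] ℝ)) x := by
  have h1 : HasFDerivAt (fun y : R3 => ‖y‖^2) (2 • innerSL ℝ x) x :=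
    (hasStrictFDerivAt_norm_sq x).hasFDerivAt
  have hx2 : ‖x‖^2 ≠ 0 := pow_ne_zero _ (norm_ne_zero_iff.2 hx)
  have h2 : HasDerivAt Real.sqrt (1 / (2 * Real.sqrt (‖x‖^2))) (‖x‖^2) :=
    Real.hasDerivAt_sqrt hx2
  have h3 := h2.comp_hasFDerivAt x h1
  have h4 : Real.sqrt ∘ (fun y : R3 => ‖y‖^2) = fun y : R3 => ‖y‖ := by
    funext y; exact Real.sqrt_sq (norm_nonneg y)
  rw [h4] at h3
  refine h3.congr_fderiv ?_
  rw [Real.sqrt_sq (norm_nonneg x)]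
  ext v
  simp [ContinuousLinearMap.smul_apply]
  have : ‖x‖ ≠ 0 := norm_ne_zero_iff.2 hx
  field_simp

lemma supD_nonneg (η : ℝ → ℝ) : 0 ≤ supD η :=
  Real.iSup_nonneg fun r => abs_nonneg _

lemma deriv_eta_zero {η : ℝ → ℝ} (hη : Cutoff η) {t : ℝ} (ht : t ∉ Set.Icc (1:ℝ) 2) :
    deriv η t = 0 := by
  rw [Set.mem_Icc, not_and_or, not_le, not_le] at ht
  rcases ht with ht | ht
  · have hev : η =ᶠ[nhds t] fun _ => (1:ℝ) :=
      Filter.eventually_of_mem (Iio_mem_nhds ht) (fun s hs => hη.2.2.1 s (le_of_lt hs))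
    rw [hev.deriv_eq]; simp
  · have hev : η =ᶠ[nhds t] fun _ => (0:ℝ) :=
      Filter.eventually_of_mem (Ioi_mem_nhds ht) (fun s hs => hη.2.2.2 s (le_of_lt hs))
    rw [hev.deriv_eq]; simp

lemma abs_deriv_le {η : ℝ → ℝ} (hη : Cutoff η) (t : ℝ) : |deriv η t| ≤ supD η := by
  have hcont : Continuous (deriv η) := hη.1.continuous_deriv (by simp)
  have hcs : HasCompactSupport (deriv η) :=
    HasCompactSupport.intro isCompact_Icc (fun s hs => deriv_eta_zero hη hs)
  have hcs2 : HasCompactSupport (fun t => |deriv η t|) := hcs.comp_left (g := abs) abs_zero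
  have hbdd : BddAbove (Set.range fun t => |deriv η t|) :=
    (hcont.abs).bddAbove_range_of_hasCompactSupport hcs2
  exact le_ciSup hbdd t

lemma eta_bounds {η : ℝ → ℝ} (hη : Cutoff η) {r : ℝ} (hr : 0 ≤ r) :
    0 ≤ η r ∧ η r ≤ 1 := by
  constructor
  · rcases le_or_gt r 2 with h | h
    · have := hη.2.1 hr (by norm_num : (2:ℝ) ∈ Set.Ici 0) h
      rw [hη.2.2.2 2 le_rfl] at this; exact this
    · rw [hη.2.2.2 r h.le]
  · have := hη.2.1 (le_refl (0:ℝ) |>.trans_eq rfl : (0:ℝ) ∈ Set.Ici 0) hr hr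
    rwa [hη.2.2.1 0 (by norm_num)] at this

lemma Gfun_shift (α : ℝ) (ε : R3 → Fin 2 → Fin 3 → ℂ) (θ : ℂ) (x k : R3)
    (lam : Fin 2) (j : Fin 3) :
    Gfun α ε θ x k lam j = Gfun α ε θ 0 k lam j *
      Complex.exp (-Complex.I * (α : ℂ) * ((inner ℝ k x : ℝ) : ℂ)) := by
  simp only [Gfun, inner_zero_right]
  push_cast
  rw [mul_zero, Complex.exp_zero]
  ring

end AuxPB

lemma fderiv_Q_apply (α : ℝ) (ε : R3 → Fin 2 → Fin 3 → ℂ) (η : ℝ → ℝ) (θ : ℂ)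
    (k : R3) (lam : Fin 2) (x : R3) (j : Fin 3) (Dh : R3 →L[ℝ] ℝ)
    (hh : HasFDerivAt (fun y : R3 => η (‖y‖ * ‖k‖)) Dh x) :
    fderiv ℝ (fun y : R3 => Qfun α ε η θ y k lam) x (EuclideanSpace.single j (1:ℝ))
      = Complex.exp θ *
          ((∑ i : Fin 3, Gfun α ε θ 0 k lam i * ((x i : ℝ) : ℂ)) *
              ((Dh (EuclideanSpace.single j (1:ℝ)) : ℝ) : ℂ)
            + ((η (‖x‖ * ‖k‖) : ℝ) : ℂ) * Gfun α ε θ 0 k lam j) := by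
  set G : Fin 3 → ℂ := fun i => Gfun α ε θ 0 k lam i with hG
  have hηc : HasFDerivAt (fun y : R3 => ((η (‖y‖ * ‖k‖) : ℝ) : ℂ))
      (Complex.ofRealCLM.comp Dh) x := Complex.ofRealCLM.hasFDerivAt.comp x hh
  have hLi : ∀ i : Fin 3, HasFDerivAt (fun y : R3 => ((y i : ℝ) : ℂ))
      (Complex.ofRealCLM.comp (EuclideanSpace.proj i : R3 →L[ℝ] ℝ)) x :=
    fun i => (Complex.ofRealCLM.comp (EuclideanSpace.proj i : R3 →L[ℝ] ℝ)).hasFDerivAt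
  have hterm : ∀ i : Fin 3, HasFDerivAt
      (fun y : R3 => G i * (((η (‖y‖ * ‖k‖) : ℝ) : ℂ) * Complex.exp θ * ((y i : ℝ) : ℂ)))
      ((G i * Complex.exp θ) •
        (((η (‖x‖ * ‖k‖) : ℝ) : ℂ) • (Complex.ofRealCLM.comp (EuclideanSpace.proj i : R3 →L[ℝ] ℝ))
          + ((x i : ℝ) : ℂ) • (Complex.ofRealCLM.comp Dh))) x := by
    intro i
    have hmul := hηc.mul (hLi i)
    have h2 := hmul.const_mul (G i * Complex.exp θ)
    refine h2.congr_of_eventuallyEq (Filter.Eventually.of_forall fun y => ?_)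
    simp only [Pi.mul_apply]
    ring
  have hsum := HasFDerivAt.fun_sum (fun i (_ : i ∈ Finset.univ) => hterm i)
  have hQ : (fun y : R3 => Qfun α ε η θ y k lam)
      = fun y : R3 => ∑ i : Fin 3,
          G i * (((η (‖y‖ * ‖k‖) : ℝ) : ℂ) * Complex.exp θ * ((y i : ℝ) : ℂ)) := rfl
  rw [hQ, hsum.fderiv]
  rw [ContinuousLinearMap.sum_apply]
  have hproj : ∀ i : Fin 3,
      ((((EuclideanSpace.proj i : R3 →L[ℝ] ℝ) (EuclideanSpace.single j (1:ℝ)) : ℝ)) : ℂ)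
        = if j = i then (1:ℂ) else 0 := by
    intro i
    by_cases h : j = i
    · simp [h, EuclideanSpace.single_apply]
    · simp [EuclideanSpace.single_apply, h, Ne.symm h]
  simp only [ContinuousLinearMap.smul_apply, ContinuousLinearMap.add_apply,
    ContinuousLinearMap.comp_apply, Complex.ofRealCLM_apply, hproj,
    smul_eq_mul, mul_add, mul_ite, mul_one, mul_zero]
  rw [Finset.sum_add_distrib, Finset.sum_ite_eq]
  simp only [Finset.mem_univ, if_true]
  rw [Finset.sum_mul, Finset.mul_sum, add_comm]
  congr 1
  · exact Finset.sum_congr rfl fun i _ => by ring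
  · ring

def C' (η : ℝ → ℝ) : ℝ := Real.sqrt 3 * CA * (4 + 4 * supD η + 2 * supD2 η)

lemma hasFDerivAt_eta_comp {η : ℝ → ℝ} (hη : Cutoff η) (k : R3) (x : R3) (hx : x ≠ 0) :
    HasFDerivAt (fun y : R3 => η (‖y‖ * ‖k‖))
      (deriv η (‖x‖ * ‖k‖) • (‖k‖ • (‖x‖⁻¹ • (innerSL ℝ x : R3 →L[ℝ] ℝ)))) x := by
  have hn := hasFDerivAt_norm' x hx
  have hr := hn.mul_const ‖k‖
  have hd : HasDerivAt η (deriv η (‖x‖ * ‖k‖)) (‖x‖ * ‖k‖) :=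
    ((hη.1.differentiable (by simp)) _).hasDerivAt
  exact hd.comp_hasFDerivAt x hr

lemma hasFDerivAt_eta_comp_zero {η : ℝ → ℝ} (hη : Cutoff η) (k : R3) (hk : k ≠ 0) :
    HasFDerivAt (fun y : R3 => η (‖y‖ * ‖k‖)) (0 : R3 →L[ℝ] ℝ) 0 := by
  have hkpos : 0 < ‖k‖ := norm_pos_iff.2 hk
  have hev : (fun y : R3 => η (‖y‖ * ‖k‖)) =ᶠ[nhds (0:R3)] fun _ => (1:ℝ) := by
    apply Filter.eventually_of_mem (Metric.ball_mem_nhds (0:R3) (by positivity : (0:ℝ) < ‖k‖⁻¹))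
    intro y hy
    have hy' : ‖y‖ < ‖k‖⁻¹ := by simpa [Metric.mem_ball] using hy
    apply hη.2.2.1
    calc ‖y‖ * ‖k‖ ≤ ‖k‖⁻¹ * ‖k‖ := by
          exact mul_le_mul_of_nonneg_right hy'.le (norm_nonneg k)
      _ = 1 := inv_mul_cancel₀ hkpos.ne'
  exact (hasFDerivAt_const (1:ℝ) (0:R3)).congr_of_eventuallyEq hev

lemma coord_le_norm (x : R3) (j : Fin 3) : |x j| ≤ ‖x‖ := by
  rw [EuclideanSpace.norm_eq]
  calc |x j| = Real.sqrt (‖x j‖^2) := by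
        rw [Real.sqrt_sq_eq_abs]; rw [Real.norm_eq_abs, abs_abs]
    _ ≤ Real.sqrt (∑ i : Fin 3, ‖x i‖^2) := by
        apply Real.sqrt_le_sqrt
        exact Finset.single_le_sum (f := fun i => ‖x i‖^2) (fun i _ => sq_nonneg _)
          (Finset.mem_univ j)

set_option maxHeartbeats 1000000 in
/-- Pointwise bound (a.0.0.1) from the proof of Remark A.3. -/
theorem pointwise_bound_a001
    (α : ℝ) (hα0 : 0 < α) (hα1 : α ≤ 1)
    (ε : R3 → Fin 2 → Fin 3 → ℂ) (hε : Polarization ε)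
    (η : ℝ → ℝ) (hη : Cutoff η)
    (θ : ℂ) (x : R3) (k : R3) (hk : k ≠ 0) (lam : Fin 2) (j : Fin 3) :
    ‖GPF α ε η θ x k lam j‖ * (Real.sqrt (1 + ‖x‖ ^ 2))⁻¹
      ≤ ‖k‖ * Real.sqrt (∑ i : Fin 3, ‖Gfun α ε θ 0 k lam i‖ ^ 2) *
          (2 + supD η) := by
  have hexp : Complex.exp (-θ) * Complex.exp θ = 1 := by
    rw [← Complex.exp_add, neg_add_cancel, Complex.exp_zero]
  set N : ℝ := Real.sqrt (∑ i : Fin 3, ‖Gfun α ε θ 0 k lam i‖ ^ 2) with hN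
  have hN0 : 0 ≤ N := Real.sqrt_nonneg _
  have hk0 : 0 < ‖k‖ := norm_pos_iff.2 hk
  have hsupD := supD_nonneg η
  have hs0 : 0 < Real.sqrt (1 + ‖x‖ ^ 2) := Real.sqrt_pos.2 (by positivity)
  have hxs : ‖x‖ ≤ Real.sqrt (1 + ‖x‖ ^ 2) := by
    have h1 : Real.sqrt (‖x‖^2) ≤ Real.sqrt (1 + ‖x‖^2) := Real.sqrt_le_sqrt (by nlinarith)
    rwa [Real.sqrt_sq (norm_nonneg x)] at h1
  rw [← div_eq_mul_inv, div_le_iff₀ hs0]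
  have hGj : ‖Gfun α ε θ 0 k lam j‖ ≤ N := by
    rw [hN, show ‖Gfun α ε θ 0 k lam j‖
        = Real.sqrt (‖Gfun α ε θ 0 k lam j‖ ^ 2) from
      (Real.sqrt_sq (norm_nonneg _)).symm]
    exact Real.sqrt_le_sqrt (Finset.single_le_sum
      (f := fun i => ‖Gfun α ε θ 0 k lam i‖ ^ 2) (fun i _ => sq_nonneg _)
      (Finset.mem_univ j))
  rcases eq_or_ne x 0 with rfl | hx
  · -- x = 0
    have hGPF : GPF α ε η θ 0 k lam j = 0 := by
      rw [GPF, fderiv_Q_apply α ε η θ k lam 0 j 0 (hasFDerivAt_eta_comp_zero hη k hk)]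
      simp only [ContinuousLinearMap.zero_apply, Complex.ofReal_zero, mul_zero, zero_add,
        norm_zero, zero_mul]
      rw [hη.2.2.1 0 (by norm_num)]
      rw [← mul_assoc, hexp]
      push_cast
      ring
    rw [hGPF]
    simp only [norm_zero]
    have : 0 ≤ ‖k‖ * N * (2 + supD η) := by positivity
    positivity
  · -- x ≠ 0
    set u : ℝ := ‖x‖ * ‖k‖ with hu
    have hx0 : 0 < ‖x‖ := norm_pos_iff.2 hx
    have hu0 : 0 ≤ u := by positivity
    have hηb := eta_bounds hη hu0
    set c : ℝ := (inner ℝ k x : ℝ) with hc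
    set d : ℝ := deriv η u * (‖k‖ * (‖x‖⁻¹ * x j)) with hd
    set S : ℂ := ∑ i : Fin 3, Gfun α ε θ 0 k lam i * ((x i : ℝ) : ℂ) with hS
    set E : ℂ := Complex.exp (-Complex.I * (α : ℂ) * ((c : ℝ) : ℂ)) with hE
    have hDh_apply : (deriv η u • (‖k‖ • (‖x‖⁻¹ • (innerSL ℝ x : R3 →L[ℝ] ℝ))))
        (EuclideanSpace.single j (1:ℝ)) = d := by
      simp only [ContinuousLinearMap.smul_apply, innerSL_apply_apply, smul_eq_mul, hd]
      congr 2
      simp [EuclideanSpace.inner_single_right, real_inner_comm]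
    have hGPFeq : GPF α ε η θ x k lam j
        = Gfun α ε θ 0 k lam j * (E - ((η u : ℝ) : ℂ)) - ((d : ℝ) : ℂ) * S := by
      rw [GPF, fderiv_Q_apply α ε η θ k lam x j _ (hasFDerivAt_eta_comp hη k x hx),
        hDh_apply, Gfun_shift α ε θ x k lam j]
      rw [← mul_assoc (Complex.exp (-θ)), hexp, one_mul]
      rw [← hc, ← hE, ← hS, ← hu]
      ring
    have habs : ‖GPF α ε η θ x k lam j‖
        ≤ ‖Gfun α ε θ 0 k lam j‖ * ‖(E - ((η u : ℝ) : ℂ))‖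
          + |d| * ‖S‖ := by
      rw [hGPFeq]
      calc ‖Gfun α ε θ 0 k lam j * (E - ((η u : ℝ) : ℂ)) - ((d : ℝ) : ℂ) * S‖
          ≤ ‖Gfun α ε θ 0 k lam j * (E - ((η u : ℝ) : ℂ))‖
            + ‖(((d : ℝ) : ℂ) * S)‖ := by
            exact norm_sub_le _ _
        _ = _ := by rw [norm_mul, norm_mul, Complex.norm_real, Real.norm_eq_abs]
    have hcs : |c| ≤ ‖k‖ * ‖x‖ := abs_real_inner_le_norm k x
    have hEform : E = Complex.exp (((-(α * c) : ℝ) : ℂ) * Complex.I) := by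
      rw [hE]; congr 1; push_cast; ring
    have hEbound : ‖(E - ((η u : ℝ) : ℂ))‖ ≤ 2 * (‖k‖ * ‖x‖) := by
      by_cases huc : u ≤ 1
      · rw [hη.2.2.1 u huc]
        push_cast
        rw [hEform]
        calc ‖Complex.exp (((-(α * c) : ℝ) : ℂ) * Complex.I) - 1‖
            ≤ |(-(α * c) : ℝ)| := abs_exp_I_sub_one _
          _ = α * |c| := by rw [abs_neg, abs_mul, abs_of_pos hα0]
          _ ≤ ‖k‖ * ‖x‖ := by nlinarith [abs_nonneg c]
          _ ≤ 2 * (‖k‖ * ‖x‖) := by nlinarith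
      · push_neg at huc
        calc ‖(E - ((η u : ℝ) : ℂ))‖
            ≤ ‖E‖ + ‖((η u : ℝ) : ℂ)‖ := by
              exact norm_sub_le _ _
          _ ≤ 1 + 1 := by
              apply add_le_add
              · rw [hEform, Complex.norm_exp_ofReal_mul_I]
              · rw [Complex.norm_real, Real.norm_eq_abs, abs_of_nonneg hηb.1]; exact hηb.2
          _ ≤ 2 * (‖k‖ * ‖x‖) := by
              have : 1 < ‖x‖ * ‖k‖ := huc
              nlinarith
    have hSbound : ‖S‖ ≤ N * ‖x‖ := by
      calc ‖S‖ ≤ ∑ i : Fin 3, ‖Gfun α ε θ 0 k lam i * ((x i : ℝ) : ℂ)‖ :=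
            norm_sum_le _ _
        _ = ∑ i : Fin 3, ‖Gfun α ε θ 0 k lam i‖ * |x i| := by
            apply Finset.sum_congr rfl; intro i _; rw [norm_mul, Complex.norm_real, Real.norm_eq_abs]
        _ ≤ Real.sqrt (∑ i : Fin 3, ‖Gfun α ε θ 0 k lam i‖ ^ 2) *
              Real.sqrt (∑ i : Fin 3, |x i| ^ 2) := by
            have h2 := Finset.sum_mul_sq_le_sq_mul_sq Finset.univ
              (fun i : Fin 3 => ‖Gfun α ε θ 0 k lam i‖) (fun i => |x i|)
            have h3 : (0:ℝ) ≤ ∑ i : Fin 3, ‖Gfun α ε θ 0 k lam i‖ * |x i| :=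
              Finset.sum_nonneg fun i _ => mul_nonneg (norm_nonneg _) (abs_nonneg _)
            rw [show Real.sqrt (∑ i : Fin 3, ‖Gfun α ε θ 0 k lam i‖ ^ 2) *
                  Real.sqrt (∑ i : Fin 3, |x i| ^ 2)
                = Real.sqrt ((∑ i : Fin 3, ‖Gfun α ε θ 0 k lam i‖ ^ 2) *
                  (∑ i : Fin 3, |x i| ^ 2)) from
              (Real.sqrt_mul (Finset.sum_nonneg fun i _ => sq_nonneg _) _).symm]
            rw [show (∑ i : Fin 3, ‖Gfun α ε θ 0 k lam i‖ * |x i|)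
                = Real.sqrt ((∑ i : Fin 3, ‖Gfun α ε θ 0 k lam i‖ * |x i|)^2) from
              (Real.sqrt_sq h3).symm]
            exact Real.sqrt_le_sqrt h2
        _ = N * ‖x‖ := by
            rw [hN]
            have hnx : Real.sqrt (∑ i : Fin 3, |x i| ^ 2) = ‖x‖ := by
              rw [EuclideanSpace.norm_eq]
              simp [Real.norm_eq_abs]
            rw [hnx]
    have hdbound : |d| ≤ supD η * ‖k‖ := by
      rw [hd, abs_mul, abs_mul, abs_mul]
      have h1 : |deriv η u| ≤ supD η := abs_deriv_le hη u
      have h2 : |(‖x‖⁻¹ : ℝ)| * |x j| ≤ 1 := by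
        rw [abs_of_nonneg (by positivity : (0:ℝ) ≤ ‖x‖⁻¹)]
        rw [inv_mul_le_iff₀ hx0, mul_one]
        exact coord_le_norm x j
      have h3 : |(‖k‖ : ℝ)| = ‖k‖ := abs_of_nonneg (norm_nonneg k)
      calc |deriv η u| * (|(‖k‖ : ℝ)| * (|(‖x‖⁻¹ : ℝ)| * |x j|))
          ≤ supD η * (‖k‖ * 1) := by
            rw [h3]
            apply mul_le_mul h1 _ (by positivity) hsupD
            exact mul_le_mul_of_nonneg_left h2 (norm_nonneg k)
        _ = supD η * ‖k‖ := by ring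
    calc ‖GPF α ε η θ x k lam j‖
        ≤ ‖Gfun α ε θ 0 k lam j‖ * ‖(E - ((η u : ℝ) : ℂ))‖
          + |d| * ‖S‖ := habs
      _ ≤ N * (2 * (‖k‖ * ‖x‖)) + (supD η * ‖k‖) * (N * ‖x‖) := by
          apply add_le_add
          · exact mul_le_mul hGj hEbound (norm_nonneg _) hN0
          · exact mul_le_mul hdbound hSbound (norm_nonneg _) (by positivity)
      _ = ‖k‖ * N * (2 + supD η) * ‖x‖ := by ring
      _ ≤ ‖k‖ * N * (2 + supD η) * Real.sqrt (1 + ‖x‖ ^ 2) := by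
          apply mul_le_mul_of_nonneg_left hxs
          positivity

end
end
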